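/- Let (A, B) be a spherically complete pair of an ultrametric space M with B bounded and δ(B) ≤ dist(A, B). Suppose T : A ∪ B → A ∪ B is a noncyclic nonexpansive mapping which has the weak-regular property. Then there exist a ∈ A and b ∈ B such that Ta = a, Tb = b, and d(a, b) = dist(A, B). -/
import Mathlib

/-- A subset `A` of a metric space is *spherically complete* if every nonempty nested
family of closed balls centered at points of `A` has nonempty intersection with `A`. -/
def IsSphericallyComplete {M : Type*} [MetricSpace M] (A : Set M) : Prop :=
  ∀ (ι : Type) (c : ι → M) (r : ι → ℝ), Nonempty ι →
    (∀ i, c i ∈ A) → (∀ i, 0 ≤ r i) →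
    (∀ i j, Metric.closedBall (c i) (r i) ⊆ Metric.closedBall (c j) (r j) ∨
      Metric.closedBall (c j) (r j) ⊆ Metric.closedBall (c i) (r i)) →
    (A ∩ ⋂ i, Metric.closedBall (c i) (r i)).Nonempty

/-- The distance between two sets: `dist(A, B) = inf {d(a, b) : a ∈ A, b ∈ B}`. -/
noncomputable def setDist {M : Type*} [MetricSpace M] (A B : Set M) : ℝ :=
  sInf {d : ℝ | ∃ a ∈ A, ∃ b ∈ B, d = dist a b}

lemma ultra_ball_subset {M : Type*} [MetricSpace M] [IsUltrametricDist M]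
    {x y : M} {r s : ℝ} (h : dist y x ≤ r) (hs : s ≤ r) :
    Metric.closedBall y s ⊆ Metric.closedBall x r := by
  intro z hz
  simp only [Metric.mem_closedBall] at *
  calc dist z x ≤ max (dist z y) (dist y x) := IsUltrametricDist.dist_triangle_max z y x
  _ ≤ r := max_le (hz.trans hs) h

lemma exists_minimal_ball {M : Type*} [MetricSpace M] [IsUltrametricDist M]
    (S : Set M) (hS : IsSphericallyComplete S) (hSne : S.Nonempty)
    (g : M → ℝ) (hg0 : ∀ x ∈ S, 0 ≤ g x)
    (hmono : ∀ x ∈ S, ∀ y ∈ S, dist y x ≤ g x → g y ≤ g x) :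
    ∃ c ∈ S, ∀ y ∈ S, dist y c ≤ g c → dist c y ≤ g y ∧ g y = g c := by
  classical
  set F : Set (Set M) := {s | ∃ x ∈ S, s = Metric.closedBall x (g x)} with hF
  obtain ⟨m, hm⟩ : ∃ m, Minimal (· ∈ F) m := by
    apply zorn_superset
    intro ch hchF hch
    rcases Set.eq_empty_or_nonempty ch with rfl | hchne
    · obtain ⟨x0, hx0⟩ := hSne
      exact ⟨Metric.closedBall x0 (g x0), ⟨x0, hx0, rfl⟩, fun s hs => hs.elim⟩
    · -- index the chain by radii
      set ι : Type := {r : ℝ // ∃ x, x ∈ S ∧ Metric.closedBall x (g x) ∈ ch ∧ g x = r}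
        with hι
      have hιne : Nonempty ι := by
        obtain ⟨s, hs⟩ := hchne
        obtain ⟨x, hxS, rfl⟩ := hchF hs
        exact ⟨⟨g x, x, hxS, hs, rfl⟩⟩
      set cc : ι → M := fun i => Classical.choose i.2 with hcc
      have hccp : ∀ i : ι, cc i ∈ S ∧ Metric.closedBall (cc i) (g (cc i)) ∈ ch ∧
          g (cc i) = i.1 := fun i => Classical.choose_spec i.2
      have hchain : ∀ i j : ι,
          Metric.closedBall (cc i) (g (cc i)) ⊆ Metric.closedBall (cc j) (g (cc j)) ∨
          Metric.closedBall (cc j) (g (cc j)) ⊆ Metric.closedBall (cc i) (g (cc i)) := by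
        intro i j
        by_cases h : Metric.closedBall (cc i) (g (cc i)) = Metric.closedBall (cc j) (g (cc j))
        · exact Or.inl h.subset
        · exact hch (hccp i).2.1 (hccp j).2.1 h
      obtain ⟨z, hzS, hz⟩ := hS ι cc (fun i => g (cc i)) hιne (fun i => (hccp i).1)
        (fun i => hg0 _ (hccp i).1) hchain
      simp only [Set.mem_iInter] at hz
      -- every element of the chain contains one of the indexed balls
      have hcof : ∀ s ∈ ch, ∃ i : ι, Metric.closedBall (cc i) (g (cc i)) ⊆ s := by
        intro s hs
        obtain ⟨x, hxS, rfl⟩ := hchF hs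
        refine ⟨⟨g x, x, hxS, hs, rfl⟩, ?_⟩
        set i : ι := ⟨g x, x, hxS, hs, rfl⟩ with hidef
        have hgi : g (cc i) = g x := (hccp i).2.2
        by_cases h : Metric.closedBall (cc i) (g (cc i)) = Metric.closedBall x (g x)
        · exact h.subset
        rcases hch (hccp i).2.1 hs h with h' | h'
        · exact h'
        · -- s ⊆ ball_i, but equal radii force ball_i ⊆ s too
          have hx : x ∈ Metric.closedBall (cc i) (g (cc i)) :=
            h' (by simpa [Metric.mem_closedBall] using hg0 _ hxS)
          rw [Metric.mem_closedBall] at hx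
          exact ultra_ball_subset (by rwa [dist_comm, ← hgi]) hgi.le
      refine ⟨Metric.closedBall z (g z), ⟨z, hzS, rfl⟩, ?_⟩
      intro s hs
      obtain ⟨i, hi⟩ := hcof s hs
      have h1 : dist z (cc i) ≤ g (cc i) := by
        have := hz i; rwa [Metric.mem_closedBall] at this
      exact (ultra_ball_subset h1 (hmono _ (hccp i).1 _ hzS h1)).trans hi
  obtain ⟨c, hcS, hcm⟩ := hm.1
  subst hcm
  refine ⟨c, hcS, fun y hyS hyc => ?_⟩
  have hgy : g y ≤ g c := hmono _ hcS _ hyS hyc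
  have hsub : Metric.closedBall y (g y) ⊆ Metric.closedBall c (g c) :=
    ultra_ball_subset hyc hgy
  have heq := hm.2 ⟨y, hyS, rfl⟩ hsub
  have hcy : dist c y ≤ g y := by
    have : c ∈ Metric.closedBall y (g y) := heq (by
      simpa [Metric.mem_closedBall] using hg0 _ hcS)
    rwa [Metric.mem_closedBall] at this
  exact ⟨hcy, le_antisymm hgy (hmono _ hyS _ hcS hcy)⟩

lemma fixed_point_of_weak_regular {M : Type*} [MetricSpace M] [IsUltrametricDist M]
    (S : Set M) (hS : IsSphericallyComplete S) (hSne : S.Nonempty)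
    (T : M → M) (hTS : Set.MapsTo T S S)
    (hne : ∀ x ∈ S, ∀ y ∈ S, dist (T x) (T y) ≤ dist x y)
    (hwr : ∀ x ∈ S, x ≠ T x →
      Filter.limsup (fun n : ℕ => dist (T^[n] x) (T^[n + 1] x)) Filter.atTop < dist x (T x)) :
    ∃ c ∈ S, T c = c := by
  obtain ⟨c, hcS, hcmin⟩ := exists_minimal_ball S hS hSne (fun x => dist x (T x))
    (fun x _ => dist_nonneg)
    (fun x hx y hy hxy => by
      have h1 : dist y (T x) ≤ dist x (T x) :=
        (IsUltrametricDist.dist_triangle_max y x (T x)).trans (max_le hxy le_rfl)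
      have h2 : dist (T x) (T y) ≤ dist x (T x) :=
        (hne x hx y hy).trans (by rwa [dist_comm])
      exact (IsUltrametricDist.dist_triangle_max y (T x) (T y)).trans (max_le h1 h2))
  refine ⟨c, hcS, ?_⟩
  by_contra hc
  have hc' : c ≠ T c := fun h => hc h.symm
  have hiter : ∀ n : ℕ, T^[n] c ∈ S := fun n => hTS.iterate n hcS
  have key : ∀ n : ℕ, dist (T^[n] c) c ≤ dist c (T c) := by
    intro n
    induction n with
    | zero => simpa using dist_nonneg
    | succ n ih =>
      have h2 : dist (T^[n] c) (T (T^[n] c)) = dist c (T c) := (hcmin _ (hiter n) ih).2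
      have h3 : dist (T^[n + 1] c) (T^[n] c) ≤ dist c (T c) := by
        rw [Function.iterate_succ_apply', dist_comm, h2]
      exact (IsUltrametricDist.dist_triangle_max (T^[n + 1] c) (T^[n] c) c).trans
        (max_le h3 ih)
  have hsteps : (fun n : ℕ => dist (T^[n] c) (T^[n + 1] c)) = fun _ => dist c (T c) := by
    funext n
    rw [Function.iterate_succ_apply']
    exact (hcmin _ (hiter n) (key n)).2
  have := hwr c hcS hc'
  rw [hsteps, Filter.limsup_const] at this
  exact absurd this (lt_irrefl _)

/-- A noncyclic nonexpansive map with the weak-regular property on a spherically complete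
pair `(A, B)` with `δ(B) ≤ dist(A, B)` has fixed points `a ∈ A`, `b ∈ B` with
`d(a, b) = dist(A, B)`. -/
theorem best_proximity_fixed_points_weak_regular {M : Type*} [MetricSpace M]
    [IsUltrametricDist M]
    (A B : Set M) (hA : A.Nonempty) (hB : B.Nonempty)
    (hscA : IsSphericallyComplete A) (hscB : IsSphericallyComplete B)
    (hbd : Bornology.IsBounded B)
    (hdiam : Metric.diam B ≤ setDist A B)
    (T : M → M) (hTA : Set.MapsTo T A A) (hTB : Set.MapsTo T B B)
    (hne : ∀ x ∈ A ∪ B, ∀ y ∈ A ∪ B, dist (T x) (T y) ≤ dist x y)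
    (hwr : ∀ x ∈ A ∪ B, x ≠ T x →
      Filter.limsup (fun n : ℕ => dist (T^[n] x) (T^[n + 1] x)) Filter.atTop < dist x (T x)) :
    ∃ a ∈ A, ∃ b ∈ B, T a = a ∧ T b = b ∧ dist a b = setDist A B := by
  classical
  -- fixed point in B
  obtain ⟨b, hbB, hTb⟩ := fixed_point_of_weak_regular B hscB hB T hTB
    (fun x hx y hy => hne x (Or.inr hx) y (Or.inr hy))
    (fun x hx => hwr x (Or.inr hx))
  have hbdd : BddBelow {d : ℝ | ∃ a ∈ A, ∃ b ∈ B, d = dist a b} := by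
    refine ⟨0, ?_⟩
    rintro d ⟨a, _, b', _, rfl⟩
    exact dist_nonneg
  have hDle : ∀ a ∈ A, ∀ b' ∈ B, setDist A B ≤ dist a b' := fun a ha b' hb' =>
    csInf_le hbdd ⟨a, ha, b', hb', rfl⟩
  -- dist a b' is independent of b' ∈ B
  have hflem : ∀ a ∈ A, ∀ b' ∈ B, dist a b' = dist a b := by
    have key : ∀ a ∈ A, ∀ b1 ∈ B, ∀ b2 ∈ B, dist a b1 ≤ dist a b2 := by
      intro a ha b1 hb1 b2 hb2
      refine (IsUltrametricDist.dist_triangle_max a b2 b1).trans (max_le le_rfl ?_)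
      exact (Metric.dist_le_diam_of_mem hbd hb2 hb1).trans (hdiam.trans (hDle a ha b2 hb2))
    exact fun a ha b' hb' => le_antisymm (key a ha b' hb' b hbB) (key a ha b hbB b' hb')
  -- minimal ball in A with radius dist · b
  obtain ⟨c, hcA, hcmin⟩ := exists_minimal_ball A hscA hA (fun x => dist x b)
    (fun x _ => dist_nonneg)
    (fun x hx y hy hxy =>
      (IsUltrametricDist.dist_triangle_max y x b).trans (max_le hxy le_rfl))
  have hcD : dist c b = setDist A B := by
    refine le_antisymm ?_ (hDle c hcA b hbB)
    refine le_csInf ⟨dist c b, c, hcA, b, hbB, rfl⟩ ?_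
    rintro d ⟨a, ha, b', hb', rfl⟩
    rw [hflem a ha b' hb']
    rcases le_total (dist c b) (dist a b) with h | h
    · exact h
    · have h1 : dist a c ≤ dist c b :=
        (IsUltrametricDist.dist_triangle_max a b c).trans
          (max_le h (by rw [dist_comm]))
      exact ((hcmin a ha h1).2).ge
  have hD0 : 0 ≤ setDist A B := hcD ▸ dist_nonneg
  set D := setDist A B with hDdef
  -- the proximal set A₀
  set A₀ : Set M := A ∩ Metric.closedBall c D with hA₀def
  have hbc : dist b c = D := by rw [dist_comm]; exact hcD
  have hA₀T : Set.MapsTo T A₀ A₀ := by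
    rintro x ⟨hxA, hxc⟩
    rw [Metric.mem_closedBall] at hxc
    refine ⟨hTA hxA, ?_⟩
    rw [Metric.mem_closedBall]
    have hxb : dist x b ≤ D :=
      (IsUltrametricDist.dist_triangle_max x c b).trans (max_le hxc hcD.le)
    have hTxb : dist (T x) b ≤ D := by
      have h := hne x (Or.inl hxA) b (Or.inr hbB)
      rw [hTb] at h
      exact h.trans hxb
    exact (IsUltrametricDist.dist_triangle_max (T x) b c).trans (max_le hTxb hbc.le)
  have hA₀sc : IsSphericallyComplete A₀ := by
    intro ι cc rr hι hmem hr hch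
    have hmemc : ∀ i, dist (cc i) c ≤ D := fun i => (hmem i).2
    obtain ⟨z, hzA, hz⟩ := hscA (Option ι) (fun o => o.elim c cc) (fun o => o.elim D rr)
      ⟨none⟩
      (fun o => by cases o with
        | none => exact hcA
        | some i => exact (hmem i).1)
      (fun o => by cases o with
        | none => exact hD0
        | some i => exact hr i)
      (fun i j => by
        have hcomp : ∀ k : ι, Metric.closedBall (cc k) (rr k) ⊆ Metric.closedBall c D ∨
            Metric.closedBall c D ⊆ Metric.closedBall (cc k) (rr k) := by
          intro k
          rcases le_total (rr k) D with h | h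
          · exact Or.inl (ultra_ball_subset (hmemc k) h)
          · exact Or.inr (ultra_ball_subset (by rw [dist_comm]; exact (hmemc k).trans h) h)
        cases i with
        | none => cases j with
          | none => exact Or.inl le_rfl
          | some j => exact (hcomp j).symm
        | some i => cases j with
          | none => exact hcomp i
          | some j => exact hch i j)
    simp only [Set.mem_iInter] at hz
    refine ⟨z, ⟨⟨hzA, hz none⟩, Set.mem_iInter.2 fun i => hz (some i)⟩⟩
  -- fixed point in A₀
  obtain ⟨a, haA₀, hTa⟩ := fixed_point_of_weak_regular A₀ hA₀sc
    ⟨c, hcA, Metric.mem_closedBall_self hD0⟩ T hA₀T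
    (fun x hx y hy => hne x (Or.inl hx.1) y (Or.inl hy.1))
    (fun x hx => hwr x (Or.inl hx.1))
  refine ⟨a, haA₀.1, b, hbB, hTa, hTb, ?_⟩
  refine le_antisymm ?_ (hDle a haA₀.1 b hbB)
  have hac : dist a c ≤ D := by
    have := haA₀.2
    rwa [Metric.mem_closedBall] at this
  exact (IsUltrametricDist.dist_triangle_max a c b).trans (max_le hac hcD.le)
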